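/- arXiv:2405.17165 — 3 statements merged into one kernel-verified Lean document; each statement's English description precedes it below -/
import Mathlib

section
/- Let κ ∈ {0, 1, −1} and χ(r) = √(1 − κr²). On a domain with r > 0, χ(r) > 0, θ ∈ (0, π), the vector field ξ⁷ = (r/2)χ(r) ∂_r (i.e. X¹ = (r/2)χ(r), X² = X³ = 0) satisfies the conformal Killing system (E1)–(E6) with conformal factor ρ(r) = χ(r). In particular, for κ = 0 the factor ρ ≡ 1 is a nonzero constant, so ξ⁷ is a proper homothetic vector field, while for κ ≠ 0 the factor ρ = χ(r) is nonconstant, so ξ⁷ is a proper conformal vector field. -/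
open Real Set

noncomputable section

/-- `χ(r) = √(1 - κ r²)`. -/
def chi (κ r : ℝ) : ℝ := Real.sqrt (1 - κ * r ^ 2)

/-- partial derivative in `r` of a function of `(r, φ, θ)`. -/
def pr (f : ℝ → ℝ → ℝ → ℝ) (r φ θ : ℝ) : ℝ := deriv (fun s => f s φ θ) r

/-- partial derivative in `φ`. -/
def pphi (f : ℝ → ℝ → ℝ → ℝ) (r φ θ : ℝ) : ℝ := deriv (fun s => f r s θ) φ

/-- partial derivative in `θ`. -/
def pth (f : ℝ → ℝ → ℝ → ℝ) (r φ θ : ℝ) : ℝ := deriv (fun s => f r φ s) θ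

/-- the domain: `r > 0`, `χ(r) > 0`, `θ ∈ (0, π)` (φ unrestricted). -/
def InDomain (κ r θ : ℝ) : Prop := 0 < r ∧ 0 < chi κ r ∧ θ ∈ Set.Ioo 0 Real.pi

/-- smoothness of a function of three real variables. -/
def Smooth3 (f : ℝ → ℝ → ℝ → ℝ) : Prop :=
  ContDiff ℝ (⊤ : ℕ∞) (fun p : ℝ × ℝ × ℝ => f p.1 p.2.1 p.2.2)

/-- The conformal Killing system (E1)–(E6) for the FLRW metric, holding at every
point of the domain. -/
def CKS (κ : ℝ) (X1 X2 X3 ρ : ℝ → ℝ → ℝ → ℝ) : Prop :=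
  ∀ r φ θ : ℝ, InDomain κ r θ →
    ((2 * κ * r / (chi κ r) ^ 2) * X1 r φ θ + 2 * pr X1 r φ θ = ρ r φ θ) ∧
    (r ^ 2 * Real.sin θ ^ 2 * pr X2 r φ θ
        + (1 / (chi κ r) ^ 2) * pphi X1 r φ θ = 0) ∧
    (r ^ 2 * pr X3 r φ θ + (1 / (chi κ r) ^ 2) * pth X1 r φ θ = 0) ∧
    (2 * X1 r φ θ * Real.sin θ + 2 * r * X3 r φ θ * Real.cos θ
        + 2 * r * Real.sin θ * pphi X2 r φ θ = ρ r φ θ * r * Real.sin θ) ∧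
    (pphi X3 r φ θ + Real.sin θ ^ 2 * pth X2 r φ θ = 0) ∧
    (2 * X1 r φ θ + 2 * r * pth X3 r φ θ = ρ r φ θ * r)

lemma hasDerivAt_X1 (κ r : ℝ) (hr : (0:ℝ) < 1 - κ * r ^ 2) :
    HasDerivAt (fun s => (s / 2) * chi κ s)
      (chi κ r / 2 + (r / 2) * (-(κ * (2 * r)) / (2 * chi κ r))) r := by
  have hinner : HasDerivAt (fun s : ℝ => 1 - κ * s ^ 2) (-(κ * (2 * r))) r := by
    have := ((hasDerivAt_pow 2 r).const_mul κ).const_sub 1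
    simpa using this
  have hsqrt : HasDerivAt (fun s => chi κ s)
      (-(κ * (2 * r)) / (2 * Real.sqrt (1 - κ * r ^ 2))) r := by
    unfold chi
    exact hinner.sqrt (ne_of_gt hr)
  have := ((hasDerivAt_id r).div_const 2).mul hsqrt
  unfold chi at *
  refine this.congr_deriv ?_
  simp only [id_eq]
  ring

/-- `ξ⁷ = (r/2)χ ∂_r` satisfies the conformal Killing system with
conformal factor `ρ = χ(r)`; for `κ = 0` this factor is the nonzero constant `1`
(proper homothetic), and for `κ ≠ 0` it is nonconstant on the domain (proper
conformal). -/
theorem stmt6 (κ : ℝ) (hκ : κ = 0 ∨ κ = 1 ∨ κ = -1) :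
    CKS κ (fun r _ _ => (r / 2) * chi κ r) (fun _ _ _ => 0) (fun _ _ _ => 0)
        (fun r _ _ => chi κ r) ∧
    (κ = 0 → (∀ r : ℝ, chi 0 r = 1) ∧ (1 : ℝ) ≠ 0) ∧
    (κ ≠ 0 → ¬ ∃ c : ℝ, ∀ r θ : ℝ, InDomain κ r θ → chi κ r = c) := by
  refine ⟨?_, ?_, ?_⟩
  · intro r φ θ ⟨hr, hchi, hθ⟩
    have hpos : (0:ℝ) < 1 - κ * r ^ 2 := by
      by_contra h
      push_neg at h
      have : chi κ r = 0 := by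
        unfold chi
        exact Real.sqrt_eq_zero_of_nonpos h
      linarith
    have hchi2 : chi κ r ^ 2 = 1 - κ * r ^ 2 := Real.sq_sqrt hpos.le
    have hchine : chi κ r ≠ 0 := ne_of_gt hchi
    have hpr : pr (fun r _ _ => (r / 2) * chi κ r) r φ θ
        = chi κ r / 2 + (r / 2) * (-(κ * (2 * r)) / (2 * chi κ r)) := by
      unfold pr
      exact (hasDerivAt_X1 κ r hpos).deriv
    have hzero : ∀ a b c : ℝ, deriv (fun _ : ℝ => (0:ℝ)) a = 0 := by
      intro a b c; simp
    refine ⟨?_, ?_, ?_, ?_, ?_, ?_⟩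
    · rw [hpr]
      field_simp
      nlinarith [hchi2]
    · simp [pr, pphi]
    · simp [pr, pth]
    · simp [pphi]
      left; ring
    · simp [pphi, pth]
    · simp [pth]; ring
  · intro h0
    refine ⟨?_, one_ne_zero⟩
    intro r
    simp [chi]
  · intro hne
    rintro ⟨c, hc⟩
    rcases hκ with h | h | h
    · exact hne h
    · subst h
      have h1 : chi 1 (1/2) = c := by
        apply hc (1/2) (Real.pi/2)
        refine ⟨by norm_num, ?_, ⟨by positivity, by linarith [Real.pi_pos]⟩⟩
        unfold chi
        rw [show (1:ℝ) - 1 * (1/2)^2 = 3/4 by norm_num]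
        positivity
      have h2 : chi 1 (1/4) = c := by
        apply hc (1/4) (Real.pi/2)
        refine ⟨by norm_num, ?_, ⟨by positivity, by linarith [Real.pi_pos]⟩⟩
        unfold chi
        rw [show (1:ℝ) - 1 * (1/4)^2 = 15/16 by norm_num]
        positivity
      unfold chi at h1 h2
      rw [show (1:ℝ) - 1 * (1/2)^2 = 3/4 by norm_num] at h1
      rw [show (1:ℝ) - 1 * (1/4)^2 = 15/16 by norm_num] at h2
      have heq : Real.sqrt (3/4) = Real.sqrt (15/16) := by rw [h1, h2]
      have h3 := Real.sq_sqrt (show (0:ℝ) ≤ 3/4 by norm_num)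
      have h4 := Real.sq_sqrt (show (0:ℝ) ≤ 15/16 by norm_num)
      rw [heq] at h3
      linarith
    · subst h
      have h1 : chi (-1) 1 = c := by
        apply hc 1 (Real.pi/2)
        refine ⟨by norm_num, ?_, ⟨by positivity, by linarith [Real.pi_pos]⟩⟩
        unfold chi
        rw [show (1:ℝ) - (-1) * 1^2 = 2 by norm_num]
        positivity
      have h2 : chi (-1) 2 = c := by
        apply hc 2 (Real.pi/2)
        refine ⟨by norm_num, ?_, ⟨by positivity, by linarith [Real.pi_pos]⟩⟩
        unfold chi
        rw [show (1:ℝ) - (-1) * 2^2 = 5 by norm_num]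
        positivity
      unfold chi at h1 h2
      rw [show (1:ℝ) - (-1) * 1^2 = 2 by norm_num] at h1
      rw [show (1:ℝ) - (-1) * 2^2 = 5 by norm_num] at h2
      have heq : Real.sqrt 2 = Real.sqrt 5 := by rw [h1, h2]
      have h3 := Real.sq_sqrt (show (0:ℝ) ≤ 2 by norm_num)
      have h4 := Real.sq_sqrt (show (0:ℝ) ≤ 5 by norm_num)
      rw [heq] at h3
      linarith
end
end

section
/- Let κ ∈ {1, −1} and χ(r) = √(1 − κr²). On a domain with r > 0, χ(r) > 0, θ ∈ (0, π), the vector field ξ⁸ = −(χ(r)²/κ)cos θ ∂_r + (1/(rκ))sin θ ∂_θ (i.e. X¹ = −(χ²/κ)cos θ, X² = 0, X³ = (1/(rκ))sin θ) satisfies the conformal Killing system (E1)–(E6) with conformal factor ρ(r, θ) = 2r cos θ. Since ρ is a nonconstant function, ξ⁸ is a proper conformal vector field of the FLRW metric. -/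
open Real Set

noncomputable section

/-- for `κ = ±1`, the vector field
`ξ⁸ = −(χ²/κ)cos θ ∂_r + (1/(rκ))sin θ ∂_θ` satisfies the conformal Killing
system with conformal factor `ρ(r, θ) = 2r cos θ`, which is nonconstant on the
domain; hence `ξ⁸` is a proper conformal vector field of the FLRW metric. -/
theorem stmt7 (κ : ℝ) (hκ : κ = 1 ∨ κ = -1) :
    CKS κ (fun r _ θ => -((chi κ r) ^ 2 / κ) * Real.cos θ)
        (fun _ _ _ => 0)
        (fun r _ θ => (1 / (r * κ)) * Real.sin θ)
        (fun r _ θ => 2 * r * Real.cos θ) ∧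
    ¬ ∃ c : ℝ, ∀ r θ : ℝ, InDomain κ r θ → 2 * r * Real.cos θ = c := by

  have hκ0 : κ ≠ 0 := by rcases hκ with h | h <;> rw [h] <;> norm_num
  constructor
  · rintro r φ θ ⟨hr, hchi, hθ⟩
    have hpos : 0 < 1 - κ * r ^ 2 := Real.sqrt_pos.mp hchi
    have hsq : chi κ r ^ 2 = 1 - κ * r ^ 2 := Real.sq_sqrt hpos.le
    have hχ0 : chi κ r ^ 2 ≠ 0 := by rw [hsq]; exact ne_of_gt hpos
    -- pr X1
    have hprX1 : pr (fun r _ θ => -((chi κ r) ^ 2 / κ) * Real.cos θ) r φ θ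
        = 2 * r * Real.cos θ := by
      unfold pr
      have hc : ContinuousAt (fun s : ℝ => 1 - κ * s ^ 2) r := by fun_prop
      have hev : (fun s : ℝ => -((chi κ s) ^ 2 / κ) * Real.cos θ)
          =ᶠ[nhds r] (fun s : ℝ => -((1 - κ * s ^ 2) / κ) * Real.cos θ) := by
        filter_upwards [hc (Ioi_mem_nhds hpos)] with s hs
        have : 0 < 1 - κ * s ^ 2 := hs
        rw [show chi κ s ^ 2 = 1 - κ * s ^ 2 from Real.sq_sqrt this.le]
      rw [hev.deriv_eq]
      have h1 := ((((hasDerivAt_pow 2 r).const_mul κ).const_sub 1).div_const κ).neg.mul_const (Real.cos θ)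
      have h1' : deriv (fun s : ℝ => -((1 - κ * s ^ 2) / κ) * Real.cos θ) r = _ := h1.deriv
      rw [h1']
      field_simp
      rw [show (2:ℕ) - 1 = 1 from rfl, pow_one]; push_cast; ring
    -- pth X1
    have hpthX1 : pth (fun r _ θ => -((chi κ r) ^ 2 / κ) * Real.cos θ) r φ θ
        = (chi κ r) ^ 2 / κ * Real.sin θ := by
      unfold pth
      have h1 : HasDerivAt (fun s : ℝ => -((chi κ r) ^ 2 / κ) * Real.cos s)
          (-((chi κ r) ^ 2 / κ) * (-Real.sin θ)) θ :=
        (Real.hasDerivAt_cos θ).const_mul _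
      rw [h1.deriv]; ring
    -- pphi X1
    have hpphiX1 : pphi (fun r _ θ => -((chi κ r) ^ 2 / κ) * Real.cos θ) r φ θ = 0 := by
      unfold pphi; simp
    -- pr X3
    have hrκ : r * κ ≠ 0 := mul_ne_zero (ne_of_gt hr) hκ0
    have hprX3 : pr (fun r _ θ => (1 / (r * κ)) * Real.sin θ) r φ θ
        = -(1 / (r ^ 2 * κ)) * Real.sin θ := by
      unfold pr
      have h1 : HasDerivAt (fun s : ℝ => (1 / (s * κ)) * Real.sin θ)
          ((-(1 * κ) / (r * κ) ^ 2) * Real.sin θ) r := by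
        simpa [one_div] using
          (((hasDerivAt_id r).mul_const κ).inv hrκ).mul_const (Real.sin θ)
      rw [h1.deriv]
      field_simp
    -- pth X3
    have hpthX3 : pth (fun r _ θ => (1 / (r * κ)) * Real.sin θ) r φ θ
        = (1 / (r * κ)) * Real.cos θ := by
      unfold pth
      have h1 : HasDerivAt (fun s : ℝ => (1 / (r * κ)) * Real.sin s)
          ((1 / (r * κ)) * Real.cos θ) θ := (Real.hasDerivAt_sin θ).const_mul _
      rw [h1.deriv]
    -- pphi X3
    have hpphiX3 : pphi (fun r _ θ => (1 / (r * κ)) * Real.sin θ) r φ θ = 0 := by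
      unfold pphi; simp
    have hz1 : pr (fun (_ _ _ : ℝ) => (0:ℝ)) r φ θ = 0 := by unfold pr; simp
    have hz2 : pphi (fun (_ _ _ : ℝ) => (0:ℝ)) r φ θ = 0 := by unfold pphi; simp
    have hz3 : pth (fun (_ _ _ : ℝ) => (0:ℝ)) r φ θ = 0 := by unfold pth; simp
    refine ⟨?_, ?_, ?_, ?_, ?_, ?_⟩ <;>
      simp only [hprX1, hpthX1, hpphiX1, hprX3, hpthX3, hpphiX3, hz1, hz2, hz3, hsq] <;>
      field_simp [hpos.ne', hκ0, hr.ne', (by rw [mul_comm]; exact hpos.ne' : 1 - r ^ 2 * κ ≠ 0)] <;> ring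
  · rintro ⟨c, hc⟩
    have hdom : ∀ θ : ℝ, θ ∈ Set.Ioo 0 Real.pi → InDomain κ (1/2) θ := by
      intro θ hθ
      refine ⟨by norm_num, ?_, hθ⟩
      rw [chi, Real.sqrt_pos]
      rcases hκ with h | h <;> rw [h] <;> norm_num
    have hpi := Real.pi_pos
    have h1 := hc (1/2) (Real.pi/2) (hdom _ ⟨by linarith, by linarith⟩)
    have h2 := hc (1/2) (Real.pi/3) (hdom _ ⟨by linarith, by linarith⟩)
    rw [Real.cos_pi_div_two] at h1
    rw [Real.cos_pi_div_three] at h2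
    norm_num at h1 h2
    rw [← h1] at h2
    norm_num at h2
end
end

section
/- Let N be a real constant and let C : (0, π) → ℝ be twice differentiable. Then C satisfies the ODE csc³θ·C(θ) − cot θ·csc θ·C'(θ) − csc θ·C''(θ) = N on (0, π) if and only if there exist constants S and M such that C(θ) = (N/2)·sin θ − S·cot θ + M·csc θ for all θ ∈ (0, π). -/
open Real

lemma const_of_Ioo {a b : ℝ} {f : ℝ → ℝ} (h : ∀ x ∈ Set.Ioo a b, HasDerivAt f 0 x)
    {x y : ℝ} (hx : x ∈ Set.Ioo a b) (hy : y ∈ Set.Ioo a b) : f x = f y := by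
  apply (convex_Ioo a b).is_const_of_fderivWithin_eq_zero
    (fun z hz => (h z hz).differentiableAt.differentiableWithinAt) ?_ hx hy
  intro z hz
  rw [fderivWithin_of_isOpen isOpen_Ioo hz, (h z hz).hasFDerivAt.fderiv]
  ext
  simp

lemma hasDerivAt_F (N S M θ : ℝ) (hs : Real.sin θ ≠ 0) :
    HasDerivAt (fun θ => (N / 2) * Real.sin θ - S * (Real.cos θ / Real.sin θ)
        + M * (1 / Real.sin θ))
      ((N / 2) * Real.cos θ + S / (Real.sin θ) ^ 2 - M * Real.cos θ / (Real.sin θ) ^ 2) θ := by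
  have h1 := ((Real.hasDerivAt_sin θ).const_mul (N / 2)).sub
    (((Real.hasDerivAt_cos θ).div (Real.hasDerivAt_sin θ) hs).const_mul S)
  have h2 := ((hasDerivAt_const θ (1:ℝ)).div (Real.hasDerivAt_sin θ) hs).const_mul M
  refine (h1.add h2).congr_deriv (Eq.symm ?_)
  field_simp
  linear_combination (-2*S) * Real.sin_sq_add_cos_sq θ

lemma hasDerivAt_G (N S M θ : ℝ) (hs : Real.sin θ ≠ 0) :
    HasDerivAt (fun θ => (N / 2) * Real.cos θ + S / (Real.sin θ) ^ 2
        - M * Real.cos θ / (Real.sin θ) ^ 2)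
      (-(N / 2) * Real.sin θ - 2 * S * Real.cos θ / (Real.sin θ) ^ 3
        + M * (1 + (Real.cos θ) ^ 2) / (Real.sin θ) ^ 3) θ := by
  have hsq : (Real.sin θ) ^ 2 ≠ 0 := pow_ne_zero 2 hs
  have h1 := (Real.hasDerivAt_cos θ).const_mul (N / 2)
  have h2 := (hasDerivAt_const θ S).div ((Real.hasDerivAt_sin θ).pow 2) hsq
  have h3 := ((Real.hasDerivAt_cos θ).const_mul M).div ((Real.hasDerivAt_sin θ).pow 2) hsq
  refine ((h1.add h2).sub h3).congr_deriv (Eq.symm ?_)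
  field_simp
  norm_num only [Pi.pow_apply]
  linear_combination (-2*M*Real.sin θ^4) * Real.sin_sq_add_cos_sq θ

/-- a twice differentiable `C` on `(0, π)` satisfies
`csc³θ·C − cot θ·csc θ·C' − csc θ·C'' = N` if and only if
`C(θ) = (N/2)sin θ − S·cot θ + M·csc θ` for some constants `S`, `M`. -/
theorem stmt19 (N : ℝ) (C : ℝ → ℝ)
    (hC : ∀ θ ∈ Set.Ioo 0 Real.pi, DifferentiableAt ℝ C θ)
    (hC' : ∀ θ ∈ Set.Ioo 0 Real.pi, DifferentiableAt ℝ (deriv C) θ) :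
    (∀ θ ∈ Set.Ioo 0 Real.pi,
        (1 / Real.sin θ) ^ 3 * C θ
          - (Real.cos θ / Real.sin θ) * (1 / Real.sin θ) * deriv C θ
          - (1 / Real.sin θ) * deriv (deriv C) θ = N) ↔
      ∃ S M : ℝ, ∀ θ ∈ Set.Ioo 0 Real.pi,
        C θ = (N / 2) * Real.sin θ - S * (Real.cos θ / Real.sin θ)
            + M * (1 / Real.sin θ) := by
  have hsin : ∀ θ ∈ Set.Ioo 0 Real.pi, Real.sin θ ≠ 0 := fun θ hθ =>
    ne_of_gt (Real.sin_pos_of_pos_of_lt_pi hθ.1 hθ.2)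
  have hmid : Real.pi / 2 ∈ Set.Ioo 0 Real.pi :=
    ⟨by positivity, by linarith [Real.pi_pos]⟩
  constructor
  · intro hODE
    -- φ θ = (C' sin + C cos)/ sin - N cos is constant
    set φ : ℝ → ℝ := fun θ =>
      (deriv C θ * Real.sin θ + C θ * Real.cos θ) / Real.sin θ - N * Real.cos θ with hφ
    have hφ' : ∀ θ ∈ Set.Ioo 0 Real.pi, HasDerivAt φ 0 θ := by
      intro θ hθ
      have hs := hsin θ hθ
      have hnum : HasDerivAt (fun x => deriv C x * Real.sin x + C x * Real.cos x)
          (deriv (deriv C) θ * Real.sin θ + deriv C θ * Real.cos θ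
            + (deriv C θ * Real.cos θ + C θ * (-Real.sin θ))) θ :=
        (((hC' θ hθ).hasDerivAt.mul (Real.hasDerivAt_sin θ))).add
          ((hC θ hθ).hasDerivAt.mul (Real.hasDerivAt_cos θ))
      have h := (hnum.div (Real.hasDerivAt_sin θ) hs).sub
        ((Real.hasDerivAt_cos θ).const_mul N)
      refine h.congr_deriv (Eq.symm ?_)
      have hode2 : C θ - Real.cos θ * Real.sin θ * deriv C θ
          - Real.sin θ ^ 2 * deriv (deriv C) θ = N * Real.sin θ ^ 3 := by
        have h0 := hODE θ hθ
        field_simp at h0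
        apply mul_left_cancel₀ (pow_ne_zero 3 hs)
        linear_combination (Real.sin θ ^ 3) * h0
      field_simp
      linear_combination hode2 + C θ * Real.sin_sq_add_cos_sq θ
    obtain ⟨S, hφconst⟩ : ∃ S, ∀ θ ∈ Set.Ioo 0 Real.pi, φ θ = S :=
      ⟨φ (Real.pi / 2), fun θ hθ => const_of_Ioo hφ' hθ hmid⟩
    -- ψ θ = C sin - (N/2) sin² + S cos is constant
    set ψ : ℝ → ℝ := fun θ =>
      C θ * Real.sin θ - (N / 2) * (Real.sin θ) ^ 2 + S * Real.cos θ with hψ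
    have hψ' : ∀ θ ∈ Set.Ioo 0 Real.pi, HasDerivAt ψ 0 θ := by
      intro θ hθ
      have hs := hsin θ hθ
      have h := (((hC θ hθ).hasDerivAt.mul (Real.hasDerivAt_sin θ)).sub
        (((Real.hasDerivAt_sin θ).pow 2).const_mul (N / 2))).add
        ((Real.hasDerivAt_cos θ).const_mul S)
      refine h.congr_deriv (Eq.symm ?_)
      have hc := hφconst θ hθ
      simp only [hφ] at hc
      field_simp at hc
      field_simp
      linear_combination (-2:ℝ) * hc
    obtain ⟨M, hψconst⟩ : ∃ M, ∀ θ ∈ Set.Ioo 0 Real.pi, ψ θ = M :=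
      ⟨ψ (Real.pi / 2), fun θ hθ => const_of_Ioo hψ' hθ hmid⟩
    refine ⟨S, M, fun θ hθ => ?_⟩
    have hc := hψconst θ hθ
    simp only [hψ] at hc
    have hs := hsin θ hθ
    field_simp
    linear_combination 2 * hc
  · rintro ⟨S, M, hCeq⟩ θ hθ
    have hs := hsin θ hθ
    set F : ℝ → ℝ := fun θ => (N / 2) * Real.sin θ - S * (Real.cos θ / Real.sin θ)
        + M * (1 / Real.sin θ) with hF
    set G : ℝ → ℝ := fun θ => (N / 2) * Real.cos θ + S / (Real.sin θ) ^ 2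
        - M * Real.cos θ / (Real.sin θ) ^ 2 with hG
    have hder1 : ∀ x ∈ Set.Ioo 0 Real.pi, deriv C x = G x := by
      intro x hx
      have hev : C =ᶠ[nhds x] F :=
        Filter.eventuallyEq_of_mem (isOpen_Ioo.mem_nhds hx) hCeq
      rw [hev.deriv_eq, (hasDerivAt_F N S M x (hsin x hx)).deriv]
    have hder2 : deriv (deriv C) θ = -(N / 2) * Real.sin θ
        - 2 * S * Real.cos θ / (Real.sin θ) ^ 3
        + M * (1 + (Real.cos θ) ^ 2) / (Real.sin θ) ^ 3 := by
      have hev : deriv C =ᶠ[nhds θ] G :=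
        Filter.eventuallyEq_of_mem (isOpen_Ioo.mem_nhds hθ) hder1
      rw [hev.deriv_eq, (hasDerivAt_G N S M θ hs).deriv]
    rw [hder2, hder1 θ hθ, hCeq θ hθ]
    simp only [hG]
    field_simp
    linear_combination (-N*Real.sin θ^2) * Real.sin_sq_add_cos_sq θ
end
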